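/- arXiv:1609.00463 — 2 statements merged into one kernel-verified Lean document; each statement's English description precedes it below -/
import Mathlib

section
/- For any fixed real numbers Δt and ΔW (with ΔW interpreted as a fixed realization of the noise increment), the map (q_k, p_k) ↦ (q_{k+1}, p_{k+1}) defined implicitly by the stochastic midpoint scheme q_{k+1} = q_k + ∂H/∂p(Q, P)Δt + ∂h/∂p(Q, P)ΔW, p_{k+1} = p_k − ∂H/∂q(Q, P)Δt − ∂h/∂q(Q, P)ΔW, with Q = (q_k+q_{k+1})/2, P = (p_k+p_{k+1})/2, is symplectic wherever it is well defined and differentiable: its Jacobian matrix M satisfies Mᵀ J M = J, where J is the standard symplectic matrix on ℝ²ᴺ. -/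
open Matrix

/-- The standard basis of `ℝᴺ × ℝᴺ` indexed by `Fin N ⊕ Fin N`. -/
noncomputable def stdBasis4 (N : ℕ) : (Fin N ⊕ Fin N) → (Fin N → ℝ) × (Fin N → ℝ) :=
  Sum.elim (fun k => (Pi.single k 1, 0)) (fun k => (0, Pi.single k 1))

/-- The Jacobian matrix of a map `F : ℝᴺ × ℝᴺ → ℝᴺ × ℝᴺ` at a point `x`. -/
noncomputable def jacobian4 (N : ℕ)
    (F : (Fin N → ℝ) × (Fin N → ℝ) → (Fin N → ℝ) × (Fin N → ℝ))
    (x : (Fin N → ℝ) × (Fin N → ℝ)) :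
    Matrix (Fin N ⊕ Fin N) (Fin N ⊕ Fin N) ℝ :=
  Matrix.of fun i j =>
    Sum.elim (fun k => (fderiv ℝ F x (stdBasis4 N j)).1 k)
             (fun k => (fderiv ℝ F x (stdBasis4 N j)).2 k) i

/-- The canonical symplectic matrix `J = [[0, I], [−I, 0]]` on `ℝ²ᴺ`. -/
noncomputable def sympJ4 (N : ℕ) : Matrix (Fin N ⊕ Fin N) (Fin N ⊕ Fin N) ℝ :=
  Matrix.fromBlocks 0 1 (-1) 0

/-!
For a fixed noise increment the scheme is the implicit midpoint rule for the single Hamiltonian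
`K = Δt H + ΔW h`: `F y = y + J ∇K ((y + F y) / 2)`. Differentiating gives `M = 1 + A (1 + M)` for
the Jacobian `M`, where `A = ½ J S` and `S` is the (symmetric) Hessian of `K` at the midpoint, so
`Aᵀ J + J A = 0`. Then `2 (Mᵀ J M - J) = (M + 1)ᵀ J (M - 1) + (M - 1)ᵀ J (M + 1)
= (M + 1)ᵀ (Aᵀ J + J A) (M + 1) = 0`.
-/

open Filter Topology

namespace Matrix

variable {ι R : Type*} [Fintype ι] [DecidableEq ι]

theorem transpose_mul_mul_add_mul_of_isSymm [CommRing R] {J S : Matrix ι ι R}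
    (hJ : Jᵀ = -J) (hJJ : J * J = -1) (hS : S.IsSymm) :
    (J * S)ᵀ * J + J * (J * S) = 0 := by
  rw [transpose_mul, hS.eq, hJ, Matrix.mul_assoc, Matrix.neg_mul, hJJ, ← Matrix.mul_assoc, hJJ]
  noncomm_ring

theorem transpose_mul_mul_eq_of_eq_one_add_mul [Field R] [NeZero (2 : R)]
    {J A M : Matrix ι ι R} (hA : Aᵀ * J + J * A = 0) (hM : M = 1 + A * (1 + M)) :
    Mᵀ * J * M = J := by
  have hM' : M - 1 = A * (M + 1) := by rw [add_comm M]; exact sub_eq_of_eq_add' hM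
  have h2 : (2 : R) • (Mᵀ * J * M - J) = 0 := calc
    _ = (M + 1)ᵀ * J * (M - 1) + (M - 1)ᵀ * J * (M + 1) := by
      simp only [transpose_add, transpose_sub, transpose_one, two_smul]
      noncomm_ring
    _ = (M + 1)ᵀ * (Aᵀ * J + J * A) * (M + 1) := by
      rw [hM', transpose_mul]
      noncomm_ring
    _ = 0 := by rw [hA, Matrix.mul_zero, Matrix.zero_mul]
  exact sub_eq_zero.mp ((smul_eq_zero.mp h2).resolve_left two_ne_zero)

end Matrix

theorem fderiv_eq_of_eventuallyEq_add_comp_midpoint {𝕜 E : Type*} [NontriviallyNormedField 𝕜]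
    [NormedAddCommGroup E] [NormedSpace 𝕜 E] {F Φ : E → E} {x : E}
    (hF : DifferentiableAt 𝕜 F x) (hΦ : DifferentiableAt 𝕜 Φ ((2⁻¹ : 𝕜) • (x + F x)))
    (hFΦ : ∀ᶠ y in 𝓝 x, F y = y + Φ ((2⁻¹ : 𝕜) • (y + F y))) :
    fderiv 𝕜 F x = .id 𝕜 E +
      (fderiv 𝕜 Φ ((2⁻¹ : 𝕜) • (x + F x))).comp ((2⁻¹ : 𝕜) • (.id 𝕜 E + fderiv 𝕜 F x)) := by
  have hmid := ((hasFDerivAt_id x).add hF.hasFDerivAt).const_smul (2⁻¹ : 𝕜)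
  exact hF.hasFDerivAt.unique
    (((hasFDerivAt_id x).add (hΦ.hasFDerivAt.comp x hmid)).congr_of_eventuallyEq hFΦ)

section coordGradient

variable {ι E : Type*} [Fintype ι] [NormedAddCommGroup E] [NormedSpace ℝ E]

noncomputable def coordGradient (b : Module.Basis ι ℝ E) (K : E → ℝ) (z : E) : E :=
  ∑ i, fderiv ℝ K z (b i) • b i

variable {b : Module.Basis ι ℝ E} {K : E → ℝ} {z : E}

theorem hasFDerivAt_coordGradient (hK : ContDiffAt ℝ 2 K z) :
    HasFDerivAt (coordGradient b K)
      (∑ i, ((ContinuousLinearMap.apply ℝ ℝ (b i)).comp (fderiv ℝ (fderiv ℝ K) z)).smulRight (b i))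
      z := by
  have hK' : HasFDerivAt (fderiv ℝ K) (fderiv ℝ (fderiv ℝ K) z) z :=
    ((hK.fderiv_right (m := 1) le_rfl).differentiableAt one_ne_zero).hasFDerivAt
  exact HasFDerivAt.fun_sum fun i _ =>
    ((ContinuousLinearMap.apply ℝ ℝ (b i)).hasFDerivAt.comp z hK').smul_const (b i)

theorem isSymm_toMatrix_fderiv_coordGradient [DecidableEq ι] (hK : ContDiffAt ℝ 2 K z) :
    (LinearMap.toMatrix b b (fderiv ℝ (coordGradient b K) z)).IsSymm := by
  have hrepr (v : E) : b.repr (fderiv ℝ (coordGradient b K) z v) =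
      fun i => fderiv ℝ (fderiv ℝ K) z v (b i) := by
    simp only [(hasFDerivAt_coordGradient hK).fderiv, _root_.sum_apply,
      ContinuousLinearMap.smulRight_apply, ContinuousLinearMap.comp_apply,
      ContinuousLinearMap.apply_apply, b.repr_sum_self]
  ext i j
  simp only [transpose_apply, LinearMap.toMatrix_apply, ContinuousLinearMap.coe_coe, hrepr]
  exact (hK.isSymmSndFDerivAt (by simp)).eq (b i) (b j)

end coordGradient

abbrev PhaseSpace (N : ℕ) := (Fin N → ℝ) × (Fin N → ℝ)

section PhaseSpace

variable {N : ℕ}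

noncomputable def phaseBasis (N : ℕ) : Module.Basis (Fin N ⊕ Fin N) ℝ (PhaseSpace N) :=
  (Pi.basisFun ℝ (Fin N)).prod (Pi.basisFun ℝ (Fin N))

theorem coe_phaseBasis : ⇑(phaseBasis N) = stdBasis4 N := by
  ext (i | i) <;> simp [phaseBasis, stdBasis4]

theorem jacobian4_eq_toMatrix (F : PhaseSpace N → PhaseSpace N) (x : PhaseSpace N) :
    jacobian4 N F x = LinearMap.toMatrix (phaseBasis N) (phaseBasis N) (fderiv ℝ F x) := by
  ext (i | i) j <;>
    simp only [jacobian4, LinearMap.toMatrix_apply, ← coe_phaseBasis] <;> simp [phaseBasis]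

noncomputable def symplecticRotation (N : ℕ) : PhaseSpace N →L[ℝ] PhaseSpace N :=
  (ContinuousLinearMap.snd ℝ _ _).prod (-ContinuousLinearMap.fst ℝ _ _)

theorem toMatrix_symplecticRotation :
    LinearMap.toMatrix (phaseBasis N) (phaseBasis N) (symplecticRotation N) = sympJ4 N := by
  ext (i | i) (j | j) <;>
    simp [LinearMap.toMatrix_apply, symplecticRotation, phaseBasis, sympJ4, one_apply,
      Pi.single_apply]

theorem sympJ4_transpose : (sympJ4 N)ᵀ = -sympJ4 N := by
  simp [sympJ4, fromBlocks_transpose, fromBlocks_neg]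

theorem sympJ4_mul_self : sympJ4 N * sympJ4 N = -1 := by
  simp [sympJ4, fromBlocks_multiply, ← fromBlocks_one, fromBlocks_neg]

noncomputable def hamiltonianVectorField (K : PhaseSpace N → ℝ) (z : PhaseSpace N) :
    PhaseSpace N :=
  (fun k => fderiv ℝ K z (0, Pi.single k 1), fun k => -fderiv ℝ K z (Pi.single k 1, 0))

theorem hamiltonianVectorField_eq (K : PhaseSpace N → ℝ) :
    hamiltonianVectorField K = symplecticRotation N ∘ coordGradient (phaseBasis N) K := by
  ext z k <;>
    simp [hamiltonianVectorField, symplecticRotation, coordGradient, phaseBasis,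
      Fintype.sum_sum_type, Prod.fst_sum, Prod.snd_sum, Finset.sum_apply, Pi.single_apply]

theorem hamiltonianVectorField_mul_add_mul {H h : PhaseSpace N → ℝ} {z : PhaseSpace N}
    (hH : DifferentiableAt ℝ H z) (hh : DifferentiableAt ℝ h z) (a c : ℝ) :
    hamiltonianVectorField (fun z => a * H z + c * h z) z =
      a • hamiltonianVectorField H z + c • hamiltonianVectorField h z := by
  have hK := ((hH.hasFDerivAt.const_mul a).fun_add (hh.hasFDerivAt.const_mul c)).fderiv
  rw [hamiltonianVectorField, hK]
  ext k
  · simp [hamiltonianVectorField]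
  · simp [hamiltonianVectorField]; ring

theorem jacobian4_symplectic_of_implicit_midpoint {K : PhaseSpace N → ℝ}
    {F : PhaseSpace N → PhaseSpace N} {x : PhaseSpace N} (hF : DifferentiableAt ℝ F x)
    (hK : ContDiffAt ℝ 2 K ((2⁻¹ : ℝ) • (x + F x)))
    (hFK : ∀ᶠ y in 𝓝 x, F y = y + hamiltonianVectorField K ((2⁻¹ : ℝ) • (y + F y))) :
    (jacobian4 N F x)ᵀ * sympJ4 N * jacobian4 N F x = sympJ4 N := by
  have hG := (hasFDerivAt_coordGradient (b := phaseBasis N) hK).differentiableAt.hasFDerivAt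
  have hΦ := (symplecticRotation N).hasFDerivAt.comp _ hG
  rw [hamiltonianVectorField_eq] at hFK
  have hD := fderiv_eq_of_eventuallyEq_add_comp_midpoint hF hΦ.differentiableAt hFK
  rw [hΦ.fderiv] at hD
  have hS := (isSymm_toMatrix_fderiv_coordGradient (b := phaseBasis N) hK).smul (2⁻¹ : ℝ)
  rw [jacobian4_eq_toMatrix]
  refine transpose_mul_mul_eq_of_eq_one_add_mul
    (transpose_mul_mul_add_mul_of_isSymm sympJ4_transpose sympJ4_mul_self hS) ?_
  conv_lhs => rw [hD]
  simp only [ContinuousLinearMap.toLinearMap_add, ContinuousLinearMap.toLinearMap_comp,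
    ContinuousLinearMap.toLinearMap_smul, ContinuousLinearMap.coe_id, map_add, map_smul,
    LinearMap.toMatrix_comp (phaseBasis N) (phaseBasis N) (phaseBasis N), LinearMap.toMatrix_id,
    toMatrix_symplecticRotation, Matrix.mul_smul, Matrix.smul_mul]

end PhaseSpace

/-- for fixed reals `Δt, ΔW`, the map `(q_k,p_k) ↦ (q_{k+1},p_{k+1})`
implicitly defined by the stochastic midpoint scheme is symplectic wherever it is
well defined and differentiable: its Jacobian `M` satisfies `Mᵀ J M = J`.  The
partial gradients of the `C²` Hamiltonians `H, h` are given by `Hq, Hp, hq, hp`. -/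
theorem stmt4 (N : ℕ) (Δt ΔW : ℝ)
    (H h : (Fin N → ℝ) × (Fin N → ℝ) → ℝ)
    (hHC2 : ContDiff ℝ 2 H) (hhC2 : ContDiff ℝ 2 h)
    (Hq Hp hq hp : (Fin N → ℝ) × (Fin N → ℝ) → (Fin N → ℝ))
    (hHq : ∀ z k, Hq z k = fderiv ℝ H z (Pi.single k 1, 0))
    (hHp : ∀ z k, Hp z k = fderiv ℝ H z (0, Pi.single k 1))
    (hhq : ∀ z k, hq z k = fderiv ℝ h z (Pi.single k 1, 0))
    (hhp : ∀ z k, hp z k = fderiv ℝ h z (0, Pi.single k 1))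
    (U : Set ((Fin N → ℝ) × (Fin N → ℝ))) (hU : IsOpen U)
    (F : (Fin N → ℝ) × (Fin N → ℝ) → (Fin N → ℝ) × (Fin N → ℝ))
    (hF : ContDiffOn ℝ 1 F U)
    -- the implicit midpoint equations, with `Q = (q_k + q_{k+1})/2`,
    -- `P = (p_k + p_{k+1})/2`:
    (heq : ∀ x ∈ U,
      (F x).1 = x.1 + Δt • Hp ((x.1 + (F x).1) / 2, (x.2 + (F x).2) / 2)
                    + ΔW • hp ((x.1 + (F x).1) / 2, (x.2 + (F x).2) / 2) ∧
      (F x).2 = x.2 - Δt • Hq ((x.1 + (F x).1) / 2, (x.2 + (F x).2) / 2)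
                    - ΔW • hq ((x.1 + (F x).1) / 2, (x.2 + (F x).2) / 2)) :
    ∀ x ∈ U, (jacobian4 N F x)ᵀ * sympJ4 N * jacobian4 N F x = sympJ4 N := by
  intro x hx
  have hXH (z) : hamiltonianVectorField H z = (Hp z, -Hq z) := by
    ext k <;> simp [hamiltonianVectorField, hHp, hHq]
  have hXh (z) : hamiltonianVectorField h z = (hp z, -hq z) := by
    ext k <;> simp [hamiltonianVectorField, hhp, hhq]
  have hK : ContDiff ℝ 2 fun z => Δt * H z + ΔW * h z :=
    (contDiff_const.mul hHC2).add (contDiff_const.mul hhC2)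
  refine jacobian4_symplectic_of_implicit_midpoint
    ((hF.differentiableOn one_ne_zero x hx).differentiableAt (hU.mem_nhds hx)) hK.contDiffAt ?_
  filter_upwards [hU.mem_nhds hx] with y hy
  have hmid : (((y.1 + (F y).1) / 2, (y.2 + (F y).2) / 2) : PhaseSpace N) =
      (2⁻¹ : ℝ) • (y + F y) := by
    ext <;> simp [div_eq_inv_mul, mul_add]
  obtain ⟨hq', hp'⟩ := heq y hy
  rw [hmid] at hq' hp'
  rw [hamiltonianVectorField_mul_add_mul (hHC2.differentiable two_ne_zero _)
    (hhC2.differentiable two_ne_zero _), hXH, hXh]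
  ext : 1
  · rw [hq']; simp only [Prod.fst_add, Prod.smul_fst]; module
  · rw [hp']; simp only [Prod.snd_add, Prod.smul_snd]; module
end

section
/- For the symplectic Euler scheme q_{k+1} = q_k + ∂H/∂p(q_{k+1}, p_k)Δt, p_{k+1} = p_k − ∂H/∂q(q_{k+1}, p_k)Δt − ∂h/∂q(q_{k+1})ΔW, with fixed real Δt, ΔW, the implicitly defined map (q_k,p_k) ↦ (q_{k+1},p_{k+1}) is symplectic on ℝ² (N=1): the determinant of its Jacobian equals 1 wherever the map is well-defined and C¹. -/
/-!
Differentiating the two implicit relations at `x` expresses the Jacobian through the Hessian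
of `H` at `(q₁, p₀)`. The `ΔW h''(q₁)` term adds a multiple of the first row to the second, so it
leaves the determinant unchanged; what remains is `∂q₁/∂q₀ · (1 - Δt ∂²H/∂q∂p)`, while the first
relation alone gives `∂q₁/∂q₀ · (1 - Δt ∂²H/∂p∂q) = 1`. The two mixed partials agree because `H`
is `C²`.
-/

/-- `D` plays the Jacobian of a symplectic Euler step, `S` stands for `Δt` times the Hessian of `H`
at `(q₁, p₀)` and `k` for `ΔW h''(q₁)`. -/
def IsSymplecticEulerVariation (S : ℝ × ℝ →L[ℝ] ℝ × ℝ →L[ℝ] ℝ) (k : ℝ)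
    (D : ℝ × ℝ →L[ℝ] ℝ × ℝ) : Prop :=
  ∀ w, (D w).1 = w.1 + S ((D w).1, w.2) (0, 1) ∧
    (D w).2 = w.2 - S ((D w).1, w.2) (1, 0) - k * (D w).1

theorem IsSymplecticEulerVariation.det_eq_one {S : ℝ × ℝ →L[ℝ] ℝ × ℝ →L[ℝ] ℝ} {k : ℝ}
    {D : ℝ × ℝ →L[ℝ] ℝ × ℝ} (hD : IsSymplecticEulerVariation S k D)
    (hS : ∀ v w, S v w = S w v) :
    (D (1, 0)).1 * (D (0, 1)).2 - (D (0, 1)).1 * (D (1, 0)).2 = 1 := by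
  have hS_mk : ∀ u v w, S (u, v) w = u * S (1, 0) w + v * S (0, 1) w := fun u v w => by
    rw [show ((u, v) : ℝ × ℝ) = u • (1, 0) + v • (0, 1) by simp]
    simp only [map_add, map_smul, _root_.add_apply, FunLike.coe_smul, Pi.smul_apply, smul_eq_mul]
  obtain ⟨hq₁, hp₁⟩ := hD (1, 0)
  obtain ⟨-, hp₂⟩ := hD (0, 1)
  rw [hS_mk _ 0] at hq₁ hp₁
  rw [hS_mk _ 1, hS (0, 1) (1, 0)] at hp₂
  linear_combination (D (1, 0)).1 * hp₂ - (D (0, 1)).1 * hp₁ + hq₁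

theorem hasFDerivAt_fderiv_apply {𝕜 E G : Type*} [NontriviallyNormedField 𝕜]
    [NormedAddCommGroup E] [NormedSpace 𝕜 E] [NormedAddCommGroup G] [NormedSpace 𝕜 G]
    {H : E → G} {z : E} (hH : DifferentiableAt 𝕜 (fderiv 𝕜 H) z) (v : E) :
    HasFDerivAt (fun y => fderiv 𝕜 H y v) ((fderiv 𝕜 (fderiv 𝕜 H) z).flip v) z := by
  simpa using hH.hasFDerivAt.clm_apply (hasFDerivAt_const v z)

theorem isSymplecticEulerVariation_fderiv {Δt ΔW : ℝ} {H : ℝ × ℝ → ℝ} {g : ℝ → ℝ}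
    {F : ℝ × ℝ → ℝ × ℝ} {U : Set (ℝ × ℝ)} {x : ℝ × ℝ} (hU : U ∈ nhds x)
    (hF : DifferentiableAt ℝ F x)
    (hH : DifferentiableAt ℝ (fderiv ℝ H) ((F x).1, x.2))
    (hg : DifferentiableAt ℝ g (F x).1)
    (heq : ∀ y ∈ U,
      (F y).1 = y.1 + fderiv ℝ H ((F y).1, y.2) (0, 1) * Δt ∧
      (F y).2 = y.2 - fderiv ℝ H ((F y).1, y.2) (1, 0) * Δt - g (F y).1 * ΔW) :
    IsSymplecticEulerVariation (Δt • fderiv ℝ (fderiv ℝ H) ((F x).1, x.2))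
      (ΔW * deriv g (F x).1) (fderiv ℝ F x) := by
  intro w
  have hq := hasFDerivAt_fst.comp x hF.hasFDerivAt
  have hp := hasFDerivAt_snd.comp x hF.hasFDerivAt
  have hqp := hq.prodMk hasFDerivAt_snd
  have hq' := (hasFDerivAt_fst.add
      (((hasFDerivAt_fderiv_apply hH (0, 1)).comp x hqp).mul_const Δt)).congr_of_eventuallyEq
    (Filter.mem_of_superset hU fun y hy => (heq y hy).1)
  have hp' := ((hasFDerivAt_snd.sub
      (((hasFDerivAt_fderiv_apply hH (1, 0)).comp x hqp).mul_const Δt)).sub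
      ((hg.hasDerivAt.comp_hasFDerivAt x hq).mul_const ΔW)).congr_of_eventuallyEq
    (Filter.mem_of_superset hU fun y hy => (heq y hy).2)
  constructor
  · simpa [mul_comm] using congr($(hq.unique hq') w)
  · simpa [mul_comm, mul_assoc] using congr($(hp.unique hp') w)

theorem stmt8_general (Δt ΔW : ℝ)
    (H : ℝ × ℝ → ℝ) (hH : ContDiff ℝ 2 H)
    (h : ℝ → ℝ) (hh : ContDiff ℝ 2 h)
    (Hq Hp : ℝ × ℝ → ℝ)
    (hHq : ∀ z, Hq z = fderiv ℝ H z (1, 0))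
    (hHp : ∀ z, Hp z = fderiv ℝ H z (0, 1))
    (U : Set (ℝ × ℝ)) (hU : IsOpen U)
    (F : ℝ × ℝ → ℝ × ℝ) (hF : ContDiffOn ℝ 1 F U)
    (heq : ∀ x ∈ U,
      (F x).1 = x.1 + Hp ((F x).1, x.2) * Δt ∧
      (F x).2 = x.2 - Hq ((F x).1, x.2) * Δt - deriv h (F x).1 * ΔW) :
    ∀ x ∈ U,
      Matrix.det (Matrix.of fun i j : Fin 2 =>
        ![![(fderiv ℝ F x (1, 0)).1, (fderiv ℝ F x (0, 1)).1],
          ![(fderiv ℝ F x (1, 0)).2, (fderiv ℝ F x (0, 1)).2]] i j) = 1 := by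
  intro x hx
  obtain rfl : Hq = _ := funext hHq
  obtain rfl : Hp = _ := funext hHp
  have hHess : Differentiable ℝ (fderiv ℝ H) :=
    (hH.fderiv_right (m := 1) le_rfl).differentiable one_ne_zero
  have hh' : Differentiable ℝ (deriv h) :=
    ((contDiff_succ_iff_deriv (n := 1)).mp hh).2.2.differentiable one_ne_zero
  have hHessSymm : ∀ v w, (Δt • fderiv ℝ (fderiv ℝ H) ((F x).1, x.2)) v w =
      (Δt • fderiv ℝ (fderiv ℝ H) ((F x).1, x.2)) w v := fun v w => by
    simp [hH.contDiffAt.isSymmSndFDerivAt (by simp) v w]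
  have hFx : DifferentiableAt ℝ F x :=
    (hF.differentiableOn one_ne_zero).differentiableAt (hU.mem_nhds hx)
  rw [Matrix.det_fin_two_of]
  exact (isSymplecticEulerVariation_fderiv (hU.mem_nhds hx) hFx (hHess _) (hh' _) heq).det_eq_one
    hHessSymm

/-- for `N = 1`, the symplectic Euler scheme
`q₁ = q₀ + ∂H/∂p(q₁,p₀)Δt`, `p₁ = p₀ − ∂H/∂q(q₁,p₀)Δt − h'(q₁)ΔW`
defines (via the implicit function theorem) a map whose Jacobian determinant
equals `1` wherever the map is well defined and `C¹`; for `N = 1` this is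
equivalent to symplecticity. -/
theorem stmt8 (Δt ΔW : ℝ)
    (H : ℝ × ℝ → ℝ) (hH : ContDiff ℝ 2 H)
    (h : ℝ → ℝ) (hh : ContDiff ℝ 2 h)
    (Hq Hp : ℝ × ℝ → ℝ)
    (hHq : ∀ z, Hq z = fderiv ℝ H z (1, 0))
    (hHp : ∀ z, Hp z = fderiv ℝ H z (0, 1))
    (U : Set (ℝ × ℝ)) (hU : IsOpen U)
    (F : ℝ × ℝ → ℝ × ℝ) (hF : ContDiffOn ℝ 1 F U)
    (heq : ∀ x ∈ U,
      (F x).1 = x.1 + Hp ((F x).1, x.2) * Δt ∧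
      (F x).2 = x.2 - Hq ((F x).1, x.2) * Δt - deriv h (F x).1 * ΔW)
    -- the implicit-function-theorem nondegeneracy condition
    (hIFT : ∀ x ∈ U, 1 - Δt * deriv (fun a => Hp (a, x.2)) ((F x).1) ≠ 0) :
    ∀ x ∈ U,
      Matrix.det (Matrix.of fun i j : Fin 2 =>
        ![![(fderiv ℝ F x (1, 0)).1, (fderiv ℝ F x (0, 1)).1],
          ![(fderiv ℝ F x (1, 0)).2, (fderiv ℝ F x (0, 1)).2]] i j) = 1 :=
  stmt8_general Δt ΔW H hH h hh Hq Hp hHq hHp U hU F hF heq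
end
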